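/- arXiv:2604.28186 — 2 statements merged into one kernel-verified Lean document; each statement's English description precedes it below -/
import Mathlib

section
/- The slope of the exploitability welfare frontier is unbounded above: for every M > 0 there exist a finite two-player game with utilities in [0,1] possessing at least one coarse correlated equilibrium, and some ε ∈ (0,1], such that EWF(ε) ≥ EWF(0) + M · ε. -/
/-!
In the game `slopeGame δ` the row player pays `δ` for playing its second action, which hands the
column player a payoff of `1`. Any CCE therefore puts no mass on that action and has welfare at most
`1`, while the pure profile in which it is played has exploitability `δ` and welfare `2 - δ`.
With `δ = 1 / (M + 1)` the gain `1 - δ` equals `M δ`.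
-/

open Finset

/-- A probability distribution on a finite type. -/
def IsDist {X : Type*} [Fintype X] (p : X → ℝ) : Prop :=
  (∀ x, 0 ≤ p x) ∧ ∑ x, p x = 1

/-- The exploitability of a joint strategy:
`max_{i} max_{â_i ∈ 𝒜_i} E_{a∼π}[𝒰_i(â_i, a_{−i}) − 𝒰_i(a)]`. -/
noncomputable def expl {N : ℕ} {A : Fin N → Type} [∀ i, Fintype (A i)] [∀ i, DecidableEq (A i)]
    (U : Fin N → ((i : Fin N) → A i) → ℝ) (π : ((i : Fin N) → A i) → ℝ) : ℝ :=
  sSup {x | ∃ (i : Fin N) (b : A i),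
    x = ∑ a, π a * (U i (Function.update a i b) - U i a)}

/-- Social welfare: the sum of all players' expected utilities. -/
noncomputable def SW {N : ℕ} {A : Fin N → Type} [∀ i, Fintype (A i)]
    (U : Fin N → ((i : Fin N) → A i) → ℝ) (π : ((i : Fin N) → A i) → ℝ) : ℝ :=
  ∑ i, ∑ a, π a * U i a

/-- The exploitability welfare frontier: the maximum social welfare over all `ε`-CCEs. -/
noncomputable def EWF {N : ℕ} {A : Fin N → Type} [∀ i, Fintype (A i)] [∀ i, DecidableEq (A i)]
    (U : Fin N → ((i : Fin N) → A i) → ℝ) (ε : ℝ) : ℝ :=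
  sSup {x | ∃ π, IsDist π ∧ expl U π ≤ ε ∧ x = SW U π}

section PointMass

variable {X : Type*} [Fintype X] [DecidableEq X]

def pointMass (x₀ : X) : X → ℝ := fun x => if x = x₀ then 1 else 0

lemma sum_pointMass_mul (x₀ : X) (f : X → ℝ) : ∑ x, pointMass x₀ x * f x = f x₀ := by
  simp [pointMass, ite_mul]

lemma isDist_pointMass (x₀ : X) : IsDist (pointMass x₀) :=
  ⟨fun x => by unfold pointMass; split_ifs <;> norm_num, by simpa using sum_pointMass_mul x₀ 1⟩

end PointMass

section Frontier

variable {N : ℕ} {A : Fin N → Type} [∀ i, Fintype (A i)]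
  (U : Fin N → ((i : Fin N) → A i) → ℝ)

lemma SW_le_card {π : ((i : Fin N) → A i) → ℝ} (hU : ∀ i a, U i a ≤ 1) (hπ : IsDist π) :
    SW U π ≤ N := by
  calc SW U π ≤ ∑ _i : Fin N, ∑ a, π a :=
        sum_le_sum fun i _ => sum_le_sum fun a _ => mul_le_of_le_one_right (hπ.1 a) (hU i a)
    _ = N := by simp [hπ.2]

variable [∀ i, DecidableEq (A i)]

def deviationGain (π : ((i : Fin N) → A i) → ℝ) (i : Fin N) (b : A i) : ℝ :=
  ∑ a, π a * (U i (Function.update a i b) - U i a)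

lemma deviationGain_le_expl (π : ((i : Fin N) → A i) → ℝ) (i : Fin N) (b : A i) :
    deviationGain U π i b ≤ expl U π := by
  refine le_csSup ((Set.finite_range fun p : Σ i, A i => deviationGain U π p.1 p.2).bddAbove.mono
    ?_) ⟨i, b, rfl⟩
  rintro _ ⟨i, b, rfl⟩
  exact ⟨⟨i, b⟩, rfl⟩

lemma expl_le {π : ((i : Fin N) → A i) → ℝ} {c : ℝ} (hc : 0 ≤ c)
    (h : ∀ i b, deviationGain U π i b ≤ c) : expl U π ≤ c :=
  Real.sSup_le (by rintro _ ⟨i, b, rfl⟩; exact h i b) hc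

lemma deviationGain_pointMass (a₀ : (i : Fin N) → A i) (i : Fin N) (b : A i) :
    deviationGain U (pointMass a₀) i b = U i (Function.update a₀ i b) - U i a₀ :=
  sum_pointMass_mul a₀ _

lemma SW_pointMass (a₀ : (i : Fin N) → A i) : SW U (pointMass a₀) = ∑ i, U i a₀ :=
  sum_congr rfl fun i _ => sum_pointMass_mul a₀ (U i)

lemma le_EWF {π : ((i : Fin N) → A i) → ℝ} {ε : ℝ} (hU : ∀ i a, U i a ≤ 1) (hπ : IsDist π)
    (hε : expl U π ≤ ε) : SW U π ≤ EWF U ε :=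
  le_csSup ⟨N, by rintro _ ⟨π', hπ', _, rfl⟩; exact SW_le_card U hU hπ'⟩ ⟨π, hπ, hε, rfl⟩

lemma EWF_le {ε c : ℝ} (hc : 0 ≤ c) (h : ∀ π, IsDist π → expl U π ≤ ε → SW U π ≤ c) :
    EWF U ε ≤ c :=
  Real.sSup_le (by rintro _ ⟨π, hπ, hε, rfl⟩; exact h π hπ hε) hc

end Frontier

section SlopeGame

variable {δ : ℝ}

def slopeGame (δ : ℝ) : Fin 2 → (Fin 2 → Fin 2) → ℝ :=
  ![fun a => if a 0 = 0 then 1 else 1 - δ, fun a => if a 0 = 0 then 0 else 1]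

lemma slopeGame_mem_Icc (hδ₀ : 0 ≤ δ) (hδ₁ : δ ≤ 1) (i : Fin 2) (a : Fin 2 → Fin 2) :
    slopeGame δ i a ∈ Set.Icc 0 1 := by
  fin_cases i <;> by_cases ha : a 0 = 0 <;> simp [slopeGame, ha, hδ₀, hδ₁]

lemma expl_slopeGame_pointMass_zero (hδ : 0 ≤ δ) : expl (slopeGame δ) (pointMass 0) ≤ 0 := by
  refine expl_le _ le_rfl fun i b => ?_
  rw [deviationGain_pointMass]
  fin_cases i <;> fin_cases b <;> simp [slopeGame, Function.update, hδ]

lemma expl_slopeGame_pointMass_one (hδ : 0 ≤ δ) : expl (slopeGame δ) (pointMass 1) ≤ δ := by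
  refine expl_le _ hδ fun i b => ?_
  rw [deviationGain_pointMass]
  fin_cases i <;> fin_cases b <;> simp [slopeGame, Function.update, hδ]

lemma SW_slopeGame_pointMass_one : SW (slopeGame δ) (pointMass 1) = 2 - δ := by
  rw [SW_pointMass, Fin.sum_univ_two]
  norm_num [slopeGame, sub_add_eq_add_sub, one_add_one_eq_two]

lemma mul_SW_slopeGame {π : (Fin 2 → Fin 2) → ℝ} (hπ : IsDist π) :
    δ * SW (slopeGame δ) π = δ + (1 - δ) * deviationGain (slopeGame δ) π 0 0 := by
  have pointwise : ∀ a : Fin 2 → Fin 2, δ * (slopeGame δ 0 a + slopeGame δ 1 a) =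
      δ + (1 - δ) * (slopeGame δ 0 (Function.update a 0 0) - slopeGame δ 0 a) := by
    intro a
    by_cases ha : a 0 = 0
    · simp [slopeGame, ha]
    · simp [slopeGame, ha]; ring
  calc δ * SW (slopeGame δ) π = ∑ a, π a * (δ * (slopeGame δ 0 a + slopeGame δ 1 a)) := by
        simp only [SW, Fin.sum_univ_two, ← sum_add_distrib, mul_sum]
        exact sum_congr rfl fun a _ => by ring
    _ = δ + (1 - δ) * deviationGain (slopeGame δ) π 0 0 := by
        simp only [pointwise, mul_add, sum_add_distrib, deviationGain, mul_sum, ← sum_mul, hπ.2]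
        congr 1
        · ring
        · exact sum_congr rfl fun a _ => by ring

lemma EWF_slopeGame_zero_le_one (hδ₀ : 0 < δ) (hδ₁ : δ ≤ 1) : EWF (slopeGame δ) 0 ≤ 1 := by
  refine EWF_le _ zero_le_one fun π hπ hexpl => ?_
  have hgain := (deviationGain_le_expl (slopeGame δ) π 0 0).trans hexpl
  have hSW := mul_SW_slopeGame (δ := δ) hπ
  nlinarith

lemma two_sub_le_EWF_slopeGame (hδ₀ : 0 ≤ δ) (hδ₁ : δ ≤ 1) : 2 - δ ≤ EWF (slopeGame δ) δ :=
  SW_slopeGame_pointMass_one (δ := δ) ▸ le_EWF _ (fun i a => (slopeGame_mem_Icc hδ₀ hδ₁ i a).2)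
    (isDist_pointMass 1) (expl_slopeGame_pointMass_one hδ₀)

end SlopeGame

/-- The slope of the exploitability welfare frontier is unbounded above: for every `M > 0`
there exist a finite two-player game with utilities in `[0,1]` possessing a CCE, and some
`ε ∈ (0,1]`, such that `EWF(ε) ≥ EWF(0) + M·ε`. -/
theorem stmt8 (M : ℝ) (hM : 0 < M) :
    ∃ (sz : Fin 2 → ℕ) (U : Fin 2 → ((i : Fin 2) → Fin (sz i)) → ℝ),
      (∀ i, 0 < sz i) ∧
      (∀ i a, U i a ∈ Set.Icc (0 : ℝ) 1) ∧
      (∃ π, IsDist π ∧ expl U π ≤ 0) ∧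
      ∃ ε ∈ Set.Ioc (0 : ℝ) 1, EWF U 0 + M * ε ≤ EWF U ε := by
  set δ : ℝ := (M + 1)⁻¹
  have hδ₀ : 0 < δ := by positivity
  have hδ₁ : δ ≤ 1 := inv_le_one_of_one_le₀ (by linarith)
  have hMδ : M * δ = 1 - δ := by simp only [δ]; field_simp; ring
  refine ⟨fun _ => 2, slopeGame δ, fun _ => two_pos, slopeGame_mem_Icc hδ₀.le hδ₁,
    ⟨pointMass 0, isDist_pointMass 0, expl_slopeGame_pointMass_zero hδ₀.le⟩, δ, ⟨hδ₀, hδ₁⟩, ?_⟩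
  linarith [EWF_slopeGame_zero_le_one hδ₀ hδ₁, two_sub_le_EWF_slopeGame hδ₀.le hδ₁]
end

section
/- Weighted-objective optimum lies on the Pareto frontier: fix a finite game with utilities in [0,1] that possesses at least one coarse correlated equilibrium, and fix w ∈ [0,1). Define expl(π) = max_{i} max_{â_i∈𝒜_i} E_{a∼π}[𝒰_i(â_i, a_{−i}) − 𝒰_i(a)] and g(π) = max_{â∈𝒜} (1/N) Σ_{i=1}^N E_{a∼π}[𝒰_i(â) − 𝒰_i(a)]. Let π* be any minimizer over Δ(𝒜) of the weighted objective W(π) = max(w · expl(π), (1 − w) · g(π)), and set ε = expl(π*). Then π* maximizes social welfare subject to the exploitability budget ε: for every joint strategy π with expl(π) ≤ ε, SW(π) ≤ SW(π*), where SW(π) = Σ_{i=1}^N E_{a∼π}[𝒰_i(a)]. -/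
/-!
Suppose `expl π ≤ expl π*` but `SW π* < SW π`, and mix `π` with a CCE `π₀` at a small weight `s`.
Exploitability is convex, so the mixture has exploitability at most `(1 - s) expl π*`. The
grand-coalition gain is `g π = (max_a ∑ᵢ Uᵢ a - SW π) / N`, strictly decreasing in welfare, and
welfare is affine, so for small `s` the mixture still beats `π*` in welfare and hence has smaller `g`.
Since `g ≥ 0` this forces `W π* > 0`, and then both terms of `W` at the mixture lie strictly below
`W π*`, contradicting minimality.
-/

open Finset

/-- The grand-coalition average deviation gain:
`g(π) = max_{â∈𝒜} (1/N) Σ_{i=1}^N E_{a∼π}[𝒰_i(â) − 𝒰_i(a)]`. -/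
noncomputable def gGrand {N : ℕ} {A : Fin N → Type} [∀ i, Fintype (A i)]
    (U : Fin N → ((i : Fin N) → A i) → ℝ) (π : ((i : Fin N) → A i) → ℝ) : ℝ :=
  sSup {x | ∃ dev : (i : Fin N) → A i,
    x = (N : ℝ)⁻¹ * ∑ i, ∑ a, π a * (U i dev - U i a)}

open Filter Topology

lemma IsDist.convexComb {X : Type*} [Fintype X] {p q : X → ℝ} (hp : IsDist p) (hq : IsDist q)
    {s : ℝ} (hs0 : 0 ≤ s) (hs1 : s ≤ 1) : IsDist (fun x => (1 - s) * p x + s * q x) := by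
  refine ⟨fun x => by have := hp.1 x; have := hq.1 x; positivity, ?_⟩
  rw [sum_add_distrib, ← mul_sum, ← mul_sum, hp.2, hq.2]
  ring

lemma exists_convexComb_gt {a b c : ℝ} (h : c < a) :
    ∃ s, 0 < s ∧ s < 1 ∧ c < (1 - s) * a + s * b := by
  have hlim : Tendsto (fun s : ℝ => (1 - s) * a + s * b) (𝓝[>] 0) (𝓝 a) := by
    have : Continuous (fun s : ℝ => (1 - s) * a + s * b) := by fun_prop
    simpa using this.continuousWithinAt.tendsto (x := 0) (s := Set.Ioi 0)
  obtain ⟨s, hs, hs0, hs1⟩ :=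
    ((hlim.eventually (lt_mem_nhds h)).and (Ioo_mem_nhdsGT one_pos)).exists
  exact ⟨s, hs0, hs1, hs⟩

section Game

variable {N : ℕ} {A : Fin N → Type} [∀ i, Fintype (A i)] (U : Fin N → ((i : Fin N) → A i) → ℝ)

lemma SW_eq_sum_mul_welfare (π : ((i : Fin N) → A i) → ℝ) :
    SW U π = ∑ a, π a * ∑ i, U i a := by
  rw [SW, sum_comm]
  simp only [mul_sum]

lemma SW_convexComb (π π' : ((i : Fin N) → A i) → ℝ) (s : ℝ) :
    SW U (fun a => (1 - s) * π a + s * π' a) = (1 - s) * SW U π + s * SW U π' := by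
  simp only [SW, add_mul, sum_add_distrib, mul_sum, mul_assoc]

lemma SW_le_of_isMax {π : ((i : Fin N) → A i) → ℝ} (hπ : IsDist π) {a₀ : (i : Fin N) → A i}
    (ha₀ : ∀ a, ∑ i, U i a ≤ ∑ i, U i a₀) : SW U π ≤ ∑ i, U i a₀ :=
  calc SW U π = ∑ a, π a * ∑ i, U i a := SW_eq_sum_mul_welfare U π
    _ ≤ ∑ a, π a * ∑ i, U i a₀ :=
      sum_le_sum fun a _ => mul_le_mul_of_nonneg_left (ha₀ a) (hπ.1 a)
    _ = ∑ i, U i a₀ := by rw [← sum_mul, hπ.2, one_mul]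

lemma sum_sum_deviation_eq {π : ((i : Fin N) → A i) → ℝ} (hπ : IsDist π)
    (dev : (i : Fin N) → A i) :
    ∑ i, ∑ a, π a * (U i dev - U i a) = ∑ i, U i dev - SW U π := by
  rw [SW, ← sum_sub_distrib]
  refine sum_congr rfl fun i _ => ?_
  simp only [mul_sub, sum_sub_distrib, ← sum_mul, hπ.2, one_mul]

lemma gGrand_eq_of_isMax {π : ((i : Fin N) → A i) → ℝ} (hπ : IsDist π)
    {a₀ : (i : Fin N) → A i} (ha₀ : ∀ a, ∑ i, U i a ≤ ∑ i, U i a₀) :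
    gGrand U π = (N : ℝ)⁻¹ * (∑ i, U i a₀ - SW U π) := by
  refine IsGreatest.csSup_eq ⟨⟨a₀, by rw [sum_sum_deviation_eq U hπ]⟩, ?_⟩
  rintro x ⟨dev, rfl⟩
  rw [sum_sum_deviation_eq U hπ]
  gcongr _ * (?_ - _)
  exact ha₀ dev

variable [∀ i, Nonempty (A i)]

lemma gGrand_nonneg {π : ((i : Fin N) → A i) → ℝ} (hπ : IsDist π) : 0 ≤ gGrand U π := by
  obtain ⟨a₀, ha₀⟩ := Finite.exists_max fun a : (i : Fin N) → A i => ∑ i, U i a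
  rw [gGrand_eq_of_isMax U hπ ha₀]
  have := SW_le_of_isMax U hπ ha₀
  exact mul_nonneg (by positivity) (by linarith)

lemma gGrand_lt_gGrand_of_SW_lt (hN : 0 < N) {π π' : ((i : Fin N) → A i) → ℝ}
    (hπ : IsDist π) (hπ' : IsDist π') (h : SW U π < SW U π') : gGrand U π' < gGrand U π := by
  obtain ⟨a₀, ha₀⟩ := Finite.exists_max fun a : (i : Fin N) → A i => ∑ i, U i a
  rw [gGrand_eq_of_isMax U hπ ha₀, gGrand_eq_of_isMax U hπ' ha₀]
  gcongr

end Game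

section Exploitability

variable {N : ℕ} {A : Fin N → Type} [∀ i, Fintype (A i)] [∀ i, DecidableEq (A i)]
  (U : Fin N → ((i : Fin N) → A i) → ℝ)

lemma deviation_le_expl (π : ((i : Fin N) → A i) → ℝ) (i : Fin N) (b : A i) :
    ∑ a, π a * (U i (Function.update a i b) - U i a) ≤ expl U π := by
  refine le_csSup (Set.Finite.bddAbove ?_) ⟨i, b, rfl⟩
  refine (Set.finite_range fun p : Σ i, A i =>
    ∑ a, π a * (U p.1 (Function.update a p.1 p.2) - U p.1 a)).subset ?_
  rintro x ⟨i, b, rfl⟩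
  exact ⟨⟨i, b⟩, rfl⟩

lemma expl_le_of_forall_deviation_le [∀ i, Nonempty (A i)] (hN : 0 < N)
    {π : ((i : Fin N) → A i) → ℝ} {c : ℝ}
    (h : ∀ i b, ∑ a, π a * (U i (Function.update a i b) - U i a) ≤ c) : expl U π ≤ c :=
  csSup_le ⟨_, ⟨0, hN⟩, Classical.arbitrary _, rfl⟩ (by rintro x ⟨i, b, rfl⟩; exact h i b)

lemma expl_convexComb_le [∀ i, Nonempty (A i)] (hN : 0 < N) (π π' : ((i : Fin N) → A i) → ℝ)
    {s : ℝ} (hs0 : 0 ≤ s) (hs1 : s ≤ 1) :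
    expl U (fun a => (1 - s) * π a + s * π' a) ≤ (1 - s) * expl U π + s * expl U π' := by
  refine expl_le_of_forall_deviation_le U hN fun i b => ?_
  calc ∑ a, ((1 - s) * π a + s * π' a) * (U i (Function.update a i b) - U i a)
      = (1 - s) * ∑ a, π a * (U i (Function.update a i b) - U i a)
        + s * ∑ a, π' a * (U i (Function.update a i b) - U i a) := by
        simp only [add_mul, sum_add_distrib, mul_sum, mul_assoc]
    _ ≤ (1 - s) * expl U π + s * expl U π' := by
        gcongr <;> exact deviation_le_expl U _ i b

end Exploitability

theorem stmt11_general {N : ℕ} {A : Fin N → Type} [∀ i, Fintype (A i)] [∀ i, DecidableEq (A i)]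
    [∀ i, Nonempty (A i)] (hN : 0 < N)
    (U : Fin N → ((i : Fin N) → A i) → ℝ)
    (hCCE : ∃ π₀, IsDist π₀ ∧ expl U π₀ ≤ 0)
    (w : ℝ) (hw0 : 0 ≤ w) (hw1 : w < 1)
    (πstar : ((i : Fin N) → A i) → ℝ) (hπstar : IsDist πstar)
    (hmin : ∀ π, IsDist π →
      max (w * expl U πstar) ((1 - w) * gGrand U πstar) ≤
        max (w * expl U π) ((1 - w) * gGrand U π)) :
    ∀ π, IsDist π → expl U π ≤ expl U πstar → SW U π ≤ SW U πstar := by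
  intro π hπ hexpl
  by_contra! hSW
  obtain ⟨π₀, hπ₀, hexpl₀⟩ := hCCE
  obtain ⟨s, hs0, hs1, hSWs⟩ := exists_convexComb_gt (b := SW U π₀) hSW
  set πs := fun a => (1 - s) * π a + s * π₀ a
  have hπs : IsDist πs := hπ.convexComb hπ₀ hs0.le hs1.le
  have hg : gGrand U πs < gGrand U πstar :=
    gGrand_lt_gGrand_of_SW_lt U hN hπstar hπs (by rwa [SW_convexComb])
  have he : expl U πs ≤ (1 - s) * expl U πstar := by
    have := expl_convexComb_le U hN π π₀ hs0.le hs1.le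
    nlinarith
  set Wstar := max (w * expl U πstar) ((1 - w) * gGrand U πstar)
  have hWstar : 0 < Wstar :=
    lt_max_of_lt_right (mul_pos (sub_pos.2 hw1) ((gGrand_nonneg U hπs).trans_lt hg))
  refine (hmin πs hπs).not_gt (max_lt ?_ ?_)
  · calc w * expl U πs ≤ (1 - s) * (w * expl U πstar) := by nlinarith
      _ ≤ (1 - s) * Wstar := by gcongr; exact le_max_left _ _
      _ < Wstar := by nlinarith
  · calc (1 - w) * gGrand U πs < (1 - w) * gGrand U πstar := by gcongr
      _ ≤ Wstar := le_max_right _ _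

/-- Weighted-objective optimum lies on the Pareto frontier: in a game possessing a CCE,
for `w ∈ [0,1)`, any minimizer `π*` of `W(π) = max(w·expl(π), (1−w)·g(π))` maximizes
social welfare among all joint strategies whose exploitability is at most `expl(π*)`. -/
theorem stmt11 {N : ℕ} {A : Fin N → Type} [∀ i, Fintype (A i)] [∀ i, DecidableEq (A i)]
    [∀ i, Nonempty (A i)] (hN : 0 < N)
    (U : Fin N → ((i : Fin N) → A i) → ℝ) (hU : ∀ i a, U i a ∈ Set.Icc (0 : ℝ) 1)
    (hCCE : ∃ π₀, IsDist π₀ ∧ expl U π₀ ≤ 0)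
    (w : ℝ) (hw0 : 0 ≤ w) (hw1 : w < 1)
    (πstar : ((i : Fin N) → A i) → ℝ) (hπstar : IsDist πstar)
    (hmin : ∀ π, IsDist π →
      max (w * expl U πstar) ((1 - w) * gGrand U πstar) ≤
        max (w * expl U π) ((1 - w) * gGrand U π)) :
    ∀ π, IsDist π → expl U π ≤ expl U πstar → SW U π ≤ SW U πstar :=
  stmt11_general hN U hCCE w hw0 hw1 πstar hπstar hmin
end
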